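/- Suppose 𝒢(C) is a star topology with center node l and the center is fully stubborn: θ_l = 0. Then F has a unique fixed point x* in Δ_n, and it satisfies: (i) x* lies in the relative interior int Δ_n; (ii) x*_i = 1/n for every fully stubborn i with i ≠ l; (iii) for every partially stubborn i, x*_i = (n − √(n² − 4nθ_i(1 − θ_i)))/(2nθ_i) and x*_i < 1/n, and this value is strictly decreasing as a function of θ_i; (iv) x*_l = 1/n + (1/n)Σ_{j partially stubborn} θ_j(1 − x*_j)/(1 − θ_j x*_j) and x*_l > 1/n. -/

import Mathlib

/-! For a star whose center `l` is fully stubborn, the fixed-point equation `F x = x`, rewritten as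
`(I - W(x)ᵀΘ) z = (1/n) 1` with `z = (I - Θ)⁻¹ x`, decouples. A leaf `i` only hears itself, which
gives the quadratic `n xᵢ (1 - θᵢ xᵢ) = 1 - θᵢ`; its only root in `(-∞, 1]` is the smaller one, and
the center's equation then gives `x_l` explicitly. For `x ∈ [0,1]ⁿ` the matrix `I - W(x)ᵀΘ` is
strictly diagonally dominant by columns, hence invertible, and `1ᵀ F(x) = 1`, so the point found
lies in the simplex. -/

open Matrix

/-- `W(x) = diag(x) + (I - diag(x)) C` -/
noncomputable def Wmat {n : ℕ} (C : Matrix (Fin n) (Fin n) ℝ) (x : Fin n → ℝ) :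
    Matrix (Fin n) (Fin n) ℝ :=
  Matrix.diagonal x + (1 - Matrix.diagonal x) * C

/-- `F(x) = (I - Θ)(I - W(x)ᵀΘ)⁻¹ (1/n) 1_n` -/
noncomputable def Fmap {n : ℕ} (C : Matrix (Fin n) (Fin n) ℝ) (θ : Fin n → ℝ)
    (x : Fin n → ℝ) : Fin n → ℝ :=
  ((1 - Matrix.diagonal θ) * (1 - (Wmat C x)ᵀ * Matrix.diagonal θ)⁻¹).mulVec
    (fun _ => 1 / (n : ℝ))

/-- The simplex `Δ_n`. -/
def simplex (n : ℕ) : Set (Fin n → ℝ) := {x | (∀ i, 0 ≤ x i) ∧ ∑ i, x i = 1}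

noncomputable def quadRoot (n : ℕ) (t : ℝ) : ℝ :=
  ((n : ℝ) - Real.sqrt ((n : ℝ) ^ 2 - 4 * n * t * (1 - t))) / (2 * n * t)

section QuadRoot

variable {n : ℕ} {t : ℝ}

lemma sqrt_discr_bounds (hn : 2 ≤ n) (ht0 : 0 < t) (ht1 : t < 1) :
    n - 2 * t < Real.sqrt ((n : ℝ) ^ 2 - 4 * n * t * (1 - t)) ∧
      Real.sqrt ((n : ℝ) ^ 2 - 4 * n * t * (1 - t)) < n := by
  have hn2 : (2 : ℝ) ≤ n := by exact_mod_cast hn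
  constructor
  · apply Real.lt_sqrt_of_sq_lt
    nlinarith [mul_pos ht0 ht0]
  · rw [Real.sqrt_lt' (by linarith)]
    nlinarith [mul_pos ht0 (sub_pos.2 ht1)]

lemma quadRoot_pos (hn : 2 ≤ n) (ht0 : 0 < t) (ht1 : t < 1) : 0 < quadRoot n t := by
  have hn0 : (0 : ℝ) < n := by positivity
  exact div_pos (sub_pos.2 (sqrt_discr_bounds hn ht0 ht1).2) (by positivity)

lemma quadRoot_lt_inv (hn : 2 ≤ n) (ht0 : 0 < t) (ht1 : t < 1) : quadRoot n t < 1 / n := by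
  have hn0 : (0 : ℝ) < n := by positivity
  rw [quadRoot, div_lt_div_iff₀ (by positivity) hn0]
  nlinarith [(sqrt_discr_bounds hn ht0 ht1).1]

lemma quadRoot_eq (hn : 2 ≤ n) (ht0 : 0 < t) (ht1 : t < 1) :
    n * quadRoot n t * (1 - t * quadRoot n t) = 1 - t := by
  have hn0 : (0 : ℝ) < n := by positivity
  have hD : 0 ≤ (n : ℝ) ^ 2 - 4 * n * t * (1 - t) := by
    nlinarith [mul_nonneg hn0.le (sq_nonneg (1 - 2 * t)), (show (2 : ℝ) ≤ n by exact_mod_cast hn)]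
  have hs := Real.sq_sqrt hD
  rw [quadRoot]
  set s := Real.sqrt ((n : ℝ) ^ 2 - 4 * n * t * (1 - t))
  field_simp
  linear_combination -hs

/-- `1` lies strictly between the two roots, so the smaller root is the only one in `(-∞, 1]`. -/
lemma eq_quadRoot (hn : 2 ≤ n) (ht0 : 0 < t) (ht1 : t < 1) {y : ℝ} (hy : y ≤ 1)
    (h : n * y * (1 - t * y) = 1 - t) : y = quadRoot n t := by
  have hn2 : (2 : ℝ) ≤ n := by exact_mod_cast hn
  have hr := quadRoot_eq hn ht0 ht1
  set r := quadRoot n t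
  have hr1 : r < 1 := (quadRoot_lt_inv hn ht0 ht1).trans_le
    (by rw [div_le_one (by positivity)]; linarith)
  have hkey : (1 - r) * (n * t * (1 + r) - n) = (n - 1) * (t - 1) := by
    linear_combination hr
  have hr_sum : n * t * (1 + r) - n < 0 := by
    by_contra! hc
    nlinarith [mul_nonneg (sub_pos.2 hr1).le hc]
  have hfac : (y - r) * (n * t * (y + r) - n) = 0 := by
    linear_combination hr - h
  have hy_sum : n * t * (y + r) - n < 0 := by
    nlinarith [mul_le_mul_of_nonneg_left hy (show (0 : ℝ) ≤ n * t by positivity)]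
  linarith [(mul_eq_zero.1 hfac).resolve_right hy_sum.ne]

lemma quadRoot_strictAntiOn (hn : 2 ≤ n) : StrictAntiOn (quadRoot n) (Set.Ioo 0 1) := by
  rintro a ⟨ha0, ha1⟩ b ⟨hb0, hb1⟩ hab
  have hn2 : (2 : ℝ) ≤ n := by exact_mod_cast hn
  have hpa := quadRoot_eq hn ha0 ha1
  have hqb := quadRoot_eq hn hb0 hb1
  have hp0 := quadRoot_pos hn ha0 ha1
  have hq0 := quadRoot_pos hn hb0 hb1
  set p := quadRoot n a
  set q := quadRoot n b
  have hnp : n * p < 1 := by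
    have := quadRoot_lt_inv hn ha0 ha1; rwa [lt_div_iff₀ (by positivity), mul_comm] at this
  have hnq : n * q < 1 := by
    have := quadRoot_lt_inv hn hb0 hb1; rwa [lt_div_iff₀ (by positivity), mul_comm] at this
  have hp : 0 < 1 - n * p ^ 2 := by nlinarith
  have hq : 0 < 1 - n * q ^ 2 := by nlinarith
  -- the parameter is recovered from the root as `t = (1 - n y) / (1 - n y ^ 2)`
  have hkey : (b - a) * ((1 - n * q ^ 2) * (1 - n * p ^ 2)) =
      n * (p - q) * (1 - p - q + n * p * q) := by
    linear_combination (1 - (n : ℝ) * p ^ 2) * hqb - (1 - (n : ℝ) * q ^ 2) * hpa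
  have hpq : 0 < 1 - p - q + n * p * q := by nlinarith [mul_pos hp0 hq0]
  have hlhs : 0 < (b - a) * ((1 - n * q ^ 2) * (1 - n * p ^ 2)) := by
    have := sub_pos.2 hab; positivity
  rw [hkey] at hlhs
  by_contra! hc
  nlinarith [mul_nonneg (mul_nonneg (by positivity : (0 : ℝ) ≤ n) (sub_nonneg.2 hc)) hpq.le]

end QuadRoot

/-- `quadRoot n 0` is a junk value (division by `0`); at `t = 0` the leaf equation is linear. -/
noncomputable def leafShare (n : ℕ) (t : ℝ) : ℝ := if 0 < t then quadRoot n t else 1 / n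

section LeafShare

variable {n : ℕ} {t : ℝ}

lemma leafShare_pos (hn : 2 ≤ n) (ht1 : t < 1) : 0 < leafShare n t := by
  unfold leafShare
  split_ifs with ht0
  · exact quadRoot_pos hn ht0 ht1
  · have : (0 : ℝ) < n := by positivity
    positivity

lemma leafShare_le_inv (hn : 2 ≤ n) (ht1 : t < 1) : leafShare n t ≤ 1 / n := by
  unfold leafShare
  split_ifs with ht0
  · exact (quadRoot_lt_inv hn ht0 ht1).le
  · rfl

lemma leafShare_lt_one (hn : 2 ≤ n) (ht1 : t < 1) : leafShare n t < 1 := by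
  refine (leafShare_le_inv hn ht1).trans_lt ?_
  rw [div_lt_one (by positivity)]
  exact_mod_cast hn

lemma leafShare_eq (hn : 2 ≤ n) (ht0 : 0 ≤ t) (ht1 : t < 1) :
    n * leafShare n t * (1 - t * leafShare n t) = 1 - t := by
  unfold leafShare
  split_ifs with ht
  · exact quadRoot_eq hn ht ht1
  · have : (n : ℝ) ≠ 0 := by positivity
    rw [le_antisymm (not_lt.1 ht) ht0]
    field_simp
    ring

lemma eq_leafShare (hn : 2 ≤ n) (ht0 : 0 ≤ t) (ht1 : t < 1) {y : ℝ} (hy : y ≤ 1)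
    (h : n * y * (1 - t * y) = 1 - t) : y = leafShare n t := by
  unfold leafShare
  split_ifs with ht
  · exact eq_quadRoot hn ht ht1 hy h
  · have : (n : ℝ) ≠ 0 := by positivity
    rw [le_antisymm (not_lt.1 ht) ht0] at h
    field_simp
    linarith

end LeafShare

section DiagonallyDominant

variable {m : Type*} [Fintype m] [DecidableEq m]

lemma det_one_sub_transpose_mul_diagonal_ne_zero {W : Matrix m m ℝ} (hW0 : ∀ i j, 0 ≤ W i j)
    (hW1 : ∀ i, ∑ j, W i j ≤ 1) {θ : m → ℝ} (hθ0 : ∀ i, 0 ≤ θ i) (hθ1 : ∀ i, θ i < 1) :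
    (1 - Wᵀ * diagonal θ).det ≠ 0 := by
  apply det_ne_zero_of_sum_col_lt_diag
  intro k
  have hentry : ∀ i, (1 - Wᵀ * diagonal θ) i k = (1 : Matrix m m ℝ) i k - W k i * θ k := by
    simp [mul_diagonal]
  have hWkk : W k k ≤ 1 := (Finset.single_le_sum (fun j _ => hW0 k j) (Finset.mem_univ k)).trans (hW1 k)
  have hoff : ∑ i ∈ Finset.univ.erase k, ‖(1 - Wᵀ * diagonal θ) i k‖ =
      (∑ i, W k i - W k k) * θ k := by
    rw [← Finset.sum_erase_eq_sub (Finset.mem_univ k), Finset.sum_mul]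
    refine Finset.sum_congr rfl fun i hi => ?_
    rw [hentry, one_apply_ne (Finset.ne_of_mem_erase hi), zero_sub, norm_neg,
      Real.norm_of_nonneg (mul_nonneg (hW0 k i) (hθ0 k))]
  have hdiag : ‖(1 - Wᵀ * diagonal θ) k k‖ = 1 - W k k * θ k := by
    rw [hentry, one_apply_eq, Real.norm_of_nonneg]
    nlinarith [hθ0 k, hθ1 k, hW0 k k]
  rw [hoff, hdiag]
  nlinarith [hW1 k, hθ0 k, hθ1 k]

lemma one_sub_transpose_mul_diagonal_mulVec_apply (W : Matrix m m ℝ) (θ z : m → ℝ) (i : m) :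
    ((1 - Wᵀ * diagonal θ) *ᵥ z) i = z i - ∑ j, W j i * (θ j * z j) := by
  simp only [sub_mulVec, one_mulVec, Pi.sub_apply, ← mulVec_mulVec, mulVec_transpose]
  simp [vecMul, dotProduct, mulVec_diagonal, mul_comm]

end DiagonallyDominant

section Wmat

variable {n : ℕ} {C : Matrix (Fin n) (Fin n) ℝ} {x : Fin n → ℝ}

lemma Wmat_apply (i j : Fin n) : Wmat C x i j = (if i = j then x i else 0) + (1 - x i) * C i j := by
  simp [Wmat, sub_mul, diagonal_apply]

lemma Wmat_row_sum (hCrow : ∀ i, ∑ j, C i j = 1) (i : Fin n) : ∑ j, Wmat C x i j = 1 := by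
  simp [Wmat_apply, Finset.sum_add_distrib, ← Finset.mul_sum, hCrow]

lemma Wmat_nonneg (hC : ∀ i j, 0 ≤ C i j) (hx0 : ∀ i, 0 ≤ x i) (hx1 : ∀ i, x i ≤ 1)
    (i j : Fin n) : 0 ≤ Wmat C x i j := by
  rw [Wmat_apply]
  have := mul_nonneg (sub_nonneg.2 (hx1 i)) (hC i j)
  split_ifs <;> linarith [hx0 i]

lemma det_one_sub_Wmat_transpose_mul_diagonal_ne_zero (hC : ∀ i j, 0 ≤ C i j)
    (hCrow : ∀ i, ∑ j, C i j = 1) (hx0 : ∀ i, 0 ≤ x i) (hx1 : ∀ i, x i ≤ 1) {θ : Fin n → ℝ}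
    (hθ0 : ∀ i, 0 ≤ θ i) (hθ1 : ∀ i, θ i < 1) : (1 - (Wmat C x)ᵀ * diagonal θ).det ≠ 0 :=
  det_one_sub_transpose_mul_diagonal_ne_zero (Wmat_nonneg hC hx0 hx1)
    (fun i => (Wmat_row_sum hCrow i).le) hθ0 hθ1

end Wmat

section Fmap

variable {n : ℕ} {C : Matrix (Fin n) (Fin n) ℝ} {θ x : Fin n → ℝ}

lemma Fmap_eq_self_iff (hB : (1 - (Wmat C x)ᵀ * diagonal θ).det ≠ 0) (hθ1 : ∀ i, θ i ≠ 1) :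
    Fmap C θ x = x ↔
      (1 - (Wmat C x)ᵀ * diagonal θ) *ᵥ (fun i => x i / (1 - θ i)) = fun _ => 1 / (n : ℝ) := by
  set B := 1 - (Wmat C x)ᵀ * diagonal θ
  set z : Fin n → ℝ := fun i => x i / (1 - θ i)
  have hθ1' : ∀ i, 1 - θ i ≠ 0 := fun i => sub_ne_zero.2 (hθ1 i).symm
  have hx : (1 - diagonal θ) *ᵥ z = x := by
    funext i
    simp only [sub_mulVec, one_mulVec, Pi.sub_apply, mulVec_diagonal, z]
    field_simp [hθ1' i]
  have hinj : Function.Injective (1 - diagonal θ).mulVec := by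
    refine mulVec_injective_of_det_ne_zero ?_
    rw [← diagonal_one, diagonal_sub, det_diagonal]
    exact Finset.prod_ne_zero_iff.2 fun i _ => hθ1' i
  have hU : IsUnit B.det := isUnit_iff_ne_zero.2 hB
  calc Fmap C θ x = x ↔ (1 - diagonal θ) *ᵥ (B⁻¹ *ᵥ fun _ => 1 / (n : ℝ)) = (1 - diagonal θ) *ᵥ z := by
        rw [Fmap, mulVec_mulVec, hx]
    _ ↔ B⁻¹ *ᵥ (fun _ => 1 / (n : ℝ)) = z := hinj.eq_iff
    _ ↔ B *ᵥ z = fun _ => 1 / (n : ℝ) := by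
        constructor
        · rintro h
          rw [← h, mulVec_mulVec, mul_nonsing_inv _ hU, one_mulVec]
        · rintro h
          rw [← h, mulVec_mulVec, nonsing_inv_mul _ hU, one_mulVec]

/-- Row-stochasticity of `W(x)` gives `1ᵀ(I - W(x)ᵀΘ) = 1ᵀ(I - Θ)`. -/
lemma sum_Fmap (hn : n ≠ 0) (hCrow : ∀ i, ∑ j, C i j = 1)
    (hB : (1 - (Wmat C x)ᵀ * diagonal θ).det ≠ 0) : ∑ i, Fmap C θ x i = 1 := by
  set B := 1 - (Wmat C x)ᵀ * diagonal θ
  have hrow : Wmat C x *ᵥ 1 = 1 := by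
    funext i
    simp [mulVec, dotProduct, Wmat_row_sum hCrow]
  have hvec : (1 : Fin n → ℝ) ᵥ* (1 - diagonal θ) = 1 ᵥ* B := by
    rw [vecMul_sub, vecMul_sub, ← vecMul_vecMul, vecMul_transpose, hrow]
  calc ∑ i, Fmap C θ x i = 1 ⬝ᵥ Fmap C θ x := by simp [dotProduct]
    _ = (1 ᵥ* B ᵥ* B⁻¹) ⬝ᵥ fun _ => 1 / (n : ℝ) := by
        rw [Fmap, dotProduct_mulVec, ← vecMul_vecMul, hvec]
    _ = 1 := by
        rw [vecMul_vecMul, mul_nonsing_inv _ (isUnit_iff_ne_zero.2 hB), vecMul_one]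
        simp [dotProduct]
        field_simp

end Fmap

lemma le_one_of_mem_simplex {n : ℕ} {y : Fin n → ℝ} (hy : y ∈ simplex n) (i : Fin n) : y i ≤ 1 :=
  hy.2 ▸ Finset.single_le_sum (fun j _ => hy.1 j) (Finset.mem_univ i)

section Star

variable {n : ℕ} {C : Matrix (Fin n) (Fin n) ℝ} {θ x : Fin n → ℝ} {l : Fin n}

lemma sum_Wmat_leaf_col (hstar : ∀ i, i ≠ l → C i l = 1 ∧ ∀ j, j ≠ l → C i j = 0)
    (hl : θ l = 0) (z : Fin n → ℝ) {i : Fin n} (hi : i ≠ l) :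
    ∑ j, Wmat C x j i * (θ j * z j) = x i * (θ i * z i) := by
  rw [Finset.sum_eq_single i]
  · rw [Wmat_apply, if_pos rfl, (hstar i hi).2 i hi]
    ring
  · intro j _ hji
    rcases eq_or_ne j l with rfl | hjl
    · simp [hl]
    · simp [Wmat_apply, hji, (hstar j hjl).2 i hi]
  · simp

lemma sum_Wmat_center_col (hstar : ∀ i, i ≠ l → C i l = 1 ∧ ∀ j, j ≠ l → C i j = 0)
    (hl : θ l = 0) (z : Fin n → ℝ) :
    ∑ j, Wmat C x j l * (θ j * z j) = ∑ j, (1 - x j) * (θ j * z j) := by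
  refine Finset.sum_congr rfl fun j _ => ?_
  rcases eq_or_ne j l with rfl | hjl
  · simp [hl]
  · simp [Wmat_apply, hjl, (hstar j hjl).1]

lemma Fmap_eq_self_iff_of_star (hn : n ≠ 0)
    (hstar : ∀ i, i ≠ l → C i l = 1 ∧ ∀ j, j ≠ l → C i j = 0) (hl : θ l = 0)
    (hθ1 : ∀ i, θ i < 1) (hB : (1 - (Wmat C x)ᵀ * diagonal θ).det ≠ 0) :
    Fmap C θ x = x ↔ (∀ i, i ≠ l → n * x i * (1 - θ i * x i) = 1 - θ i) ∧
      x l = 1 / n + ∑ j, (1 - x j) * (θ j * (x j / (1 - θ j))) := by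
  have hn' : (n : ℝ) ≠ 0 := by exact_mod_cast hn
  have hθ1' : ∀ i, 1 - θ i ≠ 0 := fun i => (sub_pos.2 (hθ1 i)).ne'
  have hleaf : ∀ i, (x i / (1 - θ i) - x i * (θ i * (x i / (1 - θ i))) = 1 / n ↔
      n * x i * (1 - θ i * x i) = 1 - θ i) := by
    intro i
    rw [show x i / (1 - θ i) - x i * (θ i * (x i / (1 - θ i))) =
        x i * (1 - θ i * x i) / (1 - θ i) by field_simp, div_eq_div_iff (hθ1' i) hn']
    constructor <;> intro h <;> linear_combination h
  rw [Fmap_eq_self_iff hB fun i => (hθ1 i).ne, funext_iff]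
  simp only [one_sub_transpose_mul_diagonal_mulVec_apply]
  constructor
  · intro h
    refine ⟨fun i hi => ?_, ?_⟩
    · have := h i
      rwa [sum_Wmat_leaf_col hstar hl _ hi, hleaf i] at this
    · have := h l
      rw [sum_Wmat_center_col hstar hl, hl, sub_zero, div_one] at this
      linarith
  · rintro ⟨hleafs, hcenter⟩ i
    rcases eq_or_ne i l with rfl | hi
    · rw [sum_Wmat_center_col hstar hl, hl, sub_zero, div_one]
      linarith
    · rw [sum_Wmat_leaf_col hstar hl _ hi, hleaf i]
      exact hleafs i hi

end Star

section LeafTerm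

variable {n : ℕ} {t : ℝ}

lemma leafTerm_pos (hn : 2 ≤ n) (ht0 : 0 < t) (ht1 : t < 1) :
    0 < t * (1 - leafShare n t) / (1 - t * leafShare n t) := by
  have hg := leafShare_lt_one hn ht1
  have hg0 := leafShare_pos hn ht1
  exact div_pos (mul_pos ht0 (sub_pos.2 hg)) (by nlinarith)

lemma leafTerm_le_one (hn : 2 ≤ n) (ht0 : 0 < t) (ht1 : t < 1) :
    t * (1 - leafShare n t) / (1 - t * leafShare n t) ≤ 1 := by
  have hg := leafShare_lt_one hn ht1
  rw [div_le_one (by nlinarith)]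
  linarith

lemma leafShare_inflow_eq (hn : 2 ≤ n) (ht0 : 0 ≤ t) (ht1 : t < 1) :
    (1 - leafShare n t) * (t * (leafShare n t / (1 - t))) =
      1 / n * (t * (1 - leafShare n t) / (1 - t * leafShare n t)) := by
  have hg0 := (leafShare_pos hn ht1).ne'
  have hg1 : 1 - t * leafShare n t ≠ 0 := by
    nlinarith [leafShare_lt_one hn ht1, leafShare_pos hn ht1]
  rw [← leafShare_eq hn ht0 ht1]
  field_simp

end LeafTerm

noncomputable def starEquilibrium (n : ℕ) (θ : Fin n → ℝ) (l : Fin n) : Fin n → ℝ :=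
  Function.update (fun i => leafShare n (θ i)) l
    (1 / n + 1 / n * ∑ j ∈ Finset.univ.filter (fun j => 0 < θ j),
      θ j * (1 - leafShare n (θ j)) / (1 - θ j * leafShare n (θ j)))

section StarEquilibrium

variable {n : ℕ} {C : Matrix (Fin n) (Fin n) ℝ} {θ : Fin n → ℝ} {l : Fin n}

lemma starEquilibrium_of_ne {i : Fin n} (hi : i ≠ l) :
    starEquilibrium n θ l i = leafShare n (θ i) :=
  Function.update_of_ne hi _ _

lemma starEquilibrium_center : starEquilibrium n θ l l = 1 / n + 1 / n *
    ∑ j ∈ Finset.univ.filter (fun j => 0 < θ j),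
      θ j * (1 - leafShare n (θ j)) / (1 - θ j * leafShare n (θ j)) :=
  Function.update_self _ _ _

lemma one_div_lt_starEquilibrium_center (hn : 2 ≤ n) (hθ1 : ∀ i, θ i < 1)
    (hθex : ∃ j, 0 < θ j) : 1 / (n : ℝ) < starEquilibrium n θ l l := by
  obtain ⟨j, hj⟩ := hθex
  have hsum : 0 < ∑ j ∈ Finset.univ.filter (fun j => 0 < θ j),
      θ j * (1 - leafShare n (θ j)) / (1 - θ j * leafShare n (θ j)) :=
    Finset.sum_pos (fun k hk => leafTerm_pos hn (Finset.mem_filter.1 hk).2 (hθ1 k))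
      ⟨j, by simp [hj]⟩
  rw [starEquilibrium_center]
  have : (0 : ℝ) < n := by positivity
  exact lt_add_of_pos_right _ (by positivity)

/-- At most `n - 1` leaves feed the center, each contributing at most `1`. -/
lemma starEquilibrium_center_le_one (hn : 2 ≤ n) (hθ1 : ∀ i, θ i < 1) (hl : θ l = 0) :
    starEquilibrium n θ l l ≤ 1 := by
  have hcard : (Finset.univ.filter (fun j => 0 < θ j)).card ≤ n - 1 := by
    calc _ ≤ (Finset.univ.erase l).card :=
          Finset.card_le_card fun j hj => Finset.mem_erase.2
            ⟨by rintro rfl; simp [hl] at hj, Finset.mem_univ j⟩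
      _ = n - 1 := by simp
  have hsum : ∑ j ∈ Finset.univ.filter (fun j => 0 < θ j),
      θ j * (1 - leafShare n (θ j)) / (1 - θ j * leafShare n (θ j)) ≤ n - 1 := by
    refine (Finset.sum_le_card_nsmul _ _ 1
      fun k hk => leafTerm_le_one hn (Finset.mem_filter.1 hk).2 (hθ1 k)).trans ?_
    rw [nsmul_one]
    have : ((n - 1 : ℕ) : ℝ) = n - 1 := by push_cast [Nat.one_le_of_lt hn]; ring
    exact this ▸ (Nat.cast_le.2 hcard)
  have : (0 : ℝ) < n := by positivity
  rw [starEquilibrium_center]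
  calc _ ≤ 1 / (n : ℝ) + 1 / n * (n - 1) := by gcongr
    _ = 1 := by field_simp; ring

lemma starEquilibrium_pos (hn : 2 ≤ n) (hθ1 : ∀ i, θ i < 1) (hθex : ∃ j, 0 < θ j)
    (i : Fin n) : 0 < starEquilibrium n θ l i := by
  rcases eq_or_ne i l with rfl | hi
  · exact lt_trans (by positivity) (one_div_lt_starEquilibrium_center hn hθ1 hθex)
  · rw [starEquilibrium_of_ne hi]
    exact leafShare_pos hn (hθ1 i)

lemma starEquilibrium_le_one (hn : 2 ≤ n) (hθ1 : ∀ i, θ i < 1) (hl : θ l = 0) (i : Fin n) :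
    starEquilibrium n θ l i ≤ 1 := by
  rcases eq_or_ne i l with rfl | hi
  · exact starEquilibrium_center_le_one hn hθ1 hl
  · rw [starEquilibrium_of_ne hi]
    exact (leafShare_lt_one hn (hθ1 i)).le

lemma Fmap_eq_self_iff_eq_starEquilibrium (hn : 2 ≤ n) (hC : ∀ i j, 0 ≤ C i j)
    (hCrow : ∀ i, ∑ j, C i j = 1) (hθ0 : ∀ i, 0 ≤ θ i) (hθ1 : ∀ i, θ i < 1)
    (hstar : ∀ i, i ≠ l → C i l = 1 ∧ ∀ j, j ≠ l → C i j = 0) (hl : θ l = 0)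
    {x : Fin n → ℝ} (hx0 : ∀ i, 0 ≤ x i) (hx1 : ∀ i, x i ≤ 1) :
    Fmap C θ x = x ↔ x = starEquilibrium n θ l := by
  have hinflow : ∀ y : Fin n → ℝ, (∀ j, j ≠ l → y j = leafShare n (θ j)) →
      ∑ j, (1 - y j) * (θ j * (y j / (1 - θ j))) = 1 / n *
        ∑ j ∈ Finset.univ.filter (fun j => 0 < θ j),
          θ j * (1 - leafShare n (θ j)) / (1 - θ j * leafShare n (θ j)) := by
    intro y hy
    rw [Finset.mul_sum, ← Finset.sum_filter_of_ne (p := fun j => 0 < θ j)]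
    · refine Finset.sum_congr rfl fun j hj => ?_
      have hj := (Finset.mem_filter.1 hj).2
      rw [hy j (by rintro rfl; linarith), leafShare_inflow_eq hn hj.le (hθ1 j)]
    · intro j _ hj
      exact (hθ0 j).lt_of_ne fun h => hj (by simp [← h])
  rw [Fmap_eq_self_iff_of_star (by omega) hstar hl hθ1
    (det_one_sub_Wmat_transpose_mul_diagonal_ne_zero hC hCrow hx0 hx1 hθ0 hθ1)]
  constructor
  · rintro ⟨hleaf, hcenter⟩
    have hleaf' : ∀ i, i ≠ l → x i = leafShare n (θ i) :=
      fun i hi => eq_leafShare hn (hθ0 i) (hθ1 i) (hx1 i) (hleaf i hi)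
    funext i
    rcases eq_or_ne i l with rfl | hi
    · rw [hcenter, hinflow x hleaf', starEquilibrium_center]
    · rw [starEquilibrium_of_ne hi, hleaf' i hi]
  · rintro rfl
    refine ⟨fun i hi => ?_, ?_⟩
    · rw [starEquilibrium_of_ne hi]
      exact leafShare_eq hn (hθ0 i) (hθ1 i)
    · rw [hinflow _ fun j hj => starEquilibrium_of_ne hj, starEquilibrium_center]

end StarEquilibrium

theorem stmt13_general (n : ℕ) (hn : 2 ≤ n) (C : Matrix (Fin n) (Fin n) ℝ)
    (hCnonneg : ∀ i j, 0 ≤ C i j) (hCrow : ∀ i, ∑ j, C i j = 1)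
    (θ : Fin n → ℝ) (hθ0 : ∀ i, 0 ≤ θ i) (hθ1 : ∀ i, θ i < 1) (hθex : ∃ j, 0 < θ j)
    (l : Fin n) (hstar : ∀ i, i ≠ l → C i l = 1 ∧ ∀ j, j ≠ l → C i j = 0)
    (hl : θ l = 0) :
    ∃ xstar : Fin n → ℝ,
      (xstar ∈ simplex n ∧ Fmap C θ xstar = xstar) ∧
      (∀ y, y ∈ simplex n ∧ Fmap C θ y = y → y = xstar) ∧
      (∀ i, 0 < xstar i) ∧
      (∀ i, θ i = 0 → i ≠ l → xstar i = 1 / n) ∧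
      (∀ i, 0 < θ i →
        xstar i = ((n : ℝ) - Real.sqrt ((n : ℝ) ^ 2 - 4 * n * θ i * (1 - θ i))) /
            (2 * n * θ i) ∧
        xstar i < 1 / n) ∧
      StrictAntiOn
        (fun t : ℝ => ((n : ℝ) - Real.sqrt ((n : ℝ) ^ 2 - 4 * n * t * (1 - t))) / (2 * n * t))
        (Set.Ioo 0 1) ∧
      (xstar l = 1 / n + (1 / n) *
          ∑ j ∈ Finset.univ.filter (fun j => 0 < θ j),
            θ j * (1 - xstar j) / (1 - θ j * xstar j)) ∧
      1 / (n : ℝ) < xstar l := by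
  have hpos := starEquilibrium_pos (l := l) hn hθ1 hθex
  have hfix_iff := fun (x : Fin n → ℝ) =>
    Fmap_eq_self_iff_eq_starEquilibrium hn hCnonneg hCrow hθ0 hθ1 hstar hl (x := x)
  have hfix := (hfix_iff _ (fun i => (hpos i).le) (starEquilibrium_le_one hn hθ1 hl)).2 rfl
  have hleaf : ∀ i, 0 < θ i → i ≠ l := by
    rintro i hi rfl
    linarith
  refine ⟨starEquilibrium n θ l, ⟨⟨fun i => (hpos i).le, ?_⟩, hfix⟩, ?_, hpos, ?_, ?_,
    quadRoot_strictAntiOn hn, ?_, one_div_lt_starEquilibrium_center hn hθ1 hθex⟩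
  · rw [← hfix]
    exact sum_Fmap (by omega) hCrow (det_one_sub_Wmat_transpose_mul_diagonal_ne_zero hCnonneg
      hCrow (fun i => (hpos i).le) (starEquilibrium_le_one hn hθ1 hl) hθ0 hθ1)
  · rintro y ⟨hy, hyfix⟩
    exact (hfix_iff y hy.1 (le_one_of_mem_simplex hy)).1 hyfix
  · intro i hi0 hil
    rw [starEquilibrium_of_ne hil, leafShare, if_neg hi0.not_gt]
  · intro i hi
    rw [starEquilibrium_of_ne (hleaf i hi), leafShare, if_pos hi]
    exact ⟨rfl, quadRoot_lt_inv hn hi (hθ1 i)⟩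
  · rw [starEquilibrium_center]
    congr 2
    refine Finset.sum_congr rfl fun j hj => ?_
    rw [starEquilibrium_of_ne (hleaf j (Finset.mem_filter.1 hj).2)]

theorem stmt13 (n : ℕ) (hn : 2 ≤ n) (C : Matrix (Fin n) (Fin n) ℝ)
    (hCnonneg : ∀ i j, 0 ≤ C i j) (hCrow : ∀ i, ∑ j, C i j = 1)
    (hCdiag : ∀ i, C i i = 0)
    (θ : Fin n → ℝ) (hθ0 : ∀ i, 0 ≤ θ i) (hθ1 : ∀ i, θ i < 1) (hθex : ∃ j, 0 < θ j)
    (l : Fin n) (hstar : ∀ i, i ≠ l → C i l = 1 ∧ ∀ j, j ≠ l → C i j = 0)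
    (hl : θ l = 0) :
    ∃ xstar : Fin n → ℝ,
      (xstar ∈ simplex n ∧ Fmap C θ xstar = xstar) ∧
      (∀ y, y ∈ simplex n ∧ Fmap C θ y = y → y = xstar) ∧
      (∀ i, 0 < xstar i) ∧
      (∀ i, θ i = 0 → i ≠ l → xstar i = 1 / n) ∧
      (∀ i, 0 < θ i →
        xstar i = ((n : ℝ) - Real.sqrt ((n : ℝ) ^ 2 - 4 * n * θ i * (1 - θ i))) /
            (2 * n * θ i) ∧
        xstar i < 1 / n) ∧
      StrictAntiOn
        (fun t : ℝ => ((n : ℝ) - Real.sqrt ((n : ℝ) ^ 2 - 4 * n * t * (1 - t))) / (2 * n * t))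
        (Set.Ioo 0 1) ∧
      (xstar l = 1 / n + (1 / n) *
          ∑ j ∈ Finset.univ.filter (fun j => 0 < θ j),
            θ j * (1 - xstar j) / (1 - θ j * xstar j)) ∧
      1 / (n : ℝ) < xstar l :=
  stmt13_general n hn C hCnonneg hCrow θ hθ0 hθ1 hθex l hstar hl
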